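/- Let K be the rn×rn block matrix with identity n×n blocks on the diagonal, blocks K_{i+1,i} = -B_i for i = 1,…,r-1, block K_{1,r} = B_r, and zeros elsewhere, where B₁,…,B_r are arbitrary n×n complex matrices. Then det K = det(I + B_r B_{r-1} ⋯ B_1). -/

import Mathlib

open Matrix

/-- Product of matrices in decreasing index order: `B (r-1) * ⋯ * B 0`. -/
noncomputable def prodDesc {n : Type*} [Fintype n] [DecidableEq n] {r : ℕ}
    (B : Fin r → Matrix n n ℂ) : Matrix n n ℂ :=
  ((List.finRange r).reverse.map B).prod

/-!
Allow an arbitrary corner block `C` in place of `Bᵣ`. The last diagonal block is `1`, so taking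
the Schur complement of it removes the last block row and column; the only fill-in is
`C * B_{r-1}`, which lands in the corner of the remaining block matrix. Hence
`det K(B₁, …, B_{r-1}; C) = det K(B₁, …, B_{r-2}; C B_{r-1})`, and after `r - 1` steps the
matrix is the single block `1 + C B_{r-1} ⋯ B₁`.
-/

theorem List.prod_reverse_ofFn_succ {M : Type*} [Monoid M] {m : ℕ} (B : Fin (m + 1) → M) :
    (List.ofFn B).reverse.prod = B (Fin.last m) * (List.ofFn (Fin.init B)).reverse.prod := by
  simp only [List.ofFn_succ', List.concat_eq_append, List.reverse_append, List.reverse_singleton,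
    List.singleton_append, List.prod_cons]
  rfl

theorem prodDesc_eq_prod_reverse_ofFn {n : Type*} [Fintype n] [DecidableEq n] {r : ℕ}
    (B : Fin r → Matrix n n ℂ) : prodDesc B = (List.ofFn B).reverse.prod := by
  rw [prodDesc, List.map_reverse, List.ofFn_eq_map]

namespace Matrix

variable {n R : Type*} [Fintype n] [DecidableEq n] [CommRing R]

/-- For `m = 0` the corner block is the diagonal block, which is then `1 + C`. -/
def cyclicBidiagonal {m : ℕ} (B : Fin m → Matrix n n R) (C : Matrix n n R) :
    Matrix (Fin (m + 1) × n) (Fin (m + 1) × n) R :=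
  of fun p q =>
    ((if p.1 = q.1 then 1 else 0)
      - (if h : (p.1 : ℕ) = q.1 + 1 then B ⟨q.1, by omega⟩ else 0)
      + (if p.1 = 0 ∧ q.1 = Fin.last m then C else 0)) p.2 q.2

theorem det_cyclicBidiagonal_zero (B : Fin 0 → Matrix n n R) (C : Matrix n n R) :
    (cyclicBidiagonal B C).det = (1 + C).det := by
  rw [← det_submatrix_equiv_self (Equiv.uniqueProd n (Fin 1)).symm]
  congr 1
  ext a b
  simp [cyclicBidiagonal]

theorem det_cyclicBidiagonal_succ {m : ℕ} (B : Fin (m + 1) → Matrix n n R) (C : Matrix n n R) :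
    (cyclicBidiagonal B C).det =
      (cyclicBidiagonal (Fin.init B) (C * B (Fin.last m))).det := by
  let e : Fin (m + 2) × n ≃ (Fin (m + 1) × n) ⊕ (Fin 1 × n) :=
    (Equiv.prodCongr (finSumFinEquiv (m := m + 1) (n := 1)).symm (Equiv.refl n)).trans
      (Equiv.sumProdDistrib _ _ _)
  let col : Matrix (Fin (m + 1) × n) (Fin 1 × n) R :=
    of fun p q => if (p.1 : ℕ) = 0 then C p.2 q.2 else 0
  let row : Matrix (Fin 1 × n) (Fin (m + 1) × n) R :=
    of fun p q => if (q.1 : ℕ) = m then -B (Fin.last m) p.2 q.2 else 0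
  have hcolrow : col * row = of fun p q =>
      if (p.1 : ℕ) = 0 ∧ (q.1 : ℕ) = m then -(C * B (Fin.last m)) p.2 q.2 else 0 := by
    ext p q
    simp only [col, row, mul_apply, of_apply, Fintype.sum_prod_type]
    split_ifs <;> simp_all
  have hblocks : (cyclicBidiagonal B C).submatrix e.symm e.symm =
      fromBlocks (cyclicBidiagonal (Fin.init B) (C * B (Fin.last m)) + col * row) col row 1 := by
    rw [hcolrow]
    ext (⟨i, a⟩ | ⟨i, a⟩) (⟨j, b⟩ | ⟨j, b⟩) <;>
      simp only [e, cyclicBidiagonal, col, row, submatrix_apply, of_apply, add_apply, one_apply,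
        fromBlocks_apply₁₁, fromBlocks_apply₁₂, fromBlocks_apply₂₁, fromBlocks_apply₂₂,
        Equiv.symm_trans_apply, Equiv.sumProdDistrib_symm_apply_left,
        Equiv.sumProdDistrib_symm_apply_right, Equiv.prodCongr_symm, Equiv.prodCongr_apply,
        Equiv.symm_symm, Equiv.refl_symm, Equiv.refl_apply, finSumFinEquiv_apply_left,
        finSumFinEquiv_apply_right, Prod.map, Prod.mk.injEq, Fin.ext_iff, Fin.val_castAdd,
        Fin.val_natAdd, Fin.val_last, Fin.val_zero, Fin.val_eq_zero] <;>
      split_ifs <;> first | omega | simp_all [Fin.init, Fin.last]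
  rw [← det_submatrix_equiv_self e.symm, hblocks, det_fromBlocks_one₂₂, add_sub_cancel_right]

theorem det_cyclicBidiagonal {m : ℕ} (B : Fin m → Matrix n n R) (C : Matrix n n R) :
    (cyclicBidiagonal B C).det = (1 + C * (List.ofFn B).reverse.prod).det := by
  induction m generalizing C with
  | zero => simp [det_cyclicBidiagonal_zero]
  | succ m ih => rw [det_cyclicBidiagonal_succ, ih, mul_assoc, ← List.prod_reverse_ofFn_succ]

end Matrix

/-- Determinant of the block cyclic bidiagonal matrix: with identity diagonal blocks,
subdiagonal blocks `-Bᵢ` and corner block `Bᵣ`, one has `det K = det(I + Bᵣ ⋯ B₁)`. -/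
theorem block_cyclic_bidiagonal_det {n : Type*} [Fintype n] [DecidableEq n]
    (r : ℕ) (hr : 2 ≤ r) (B : Fin r → Matrix n n ℂ) :
    let K : Matrix (Fin r × n) (Fin r × n) ℂ :=
      Matrix.of fun p q =>
        if p.1 = q.1 then (1 : Matrix n n ℂ) p.2 q.2
        else if (p.1 : ℕ) = (q.1 : ℕ) + 1 then (-(B q.1)) p.2 q.2
        else if (p.1 : ℕ) = 0 ∧ (q.1 : ℕ) = r - 1 then (B q.1) p.2 q.2
        else 0
    K.det = (1 + prodDesc B).det := by
  intro K
  obtain ⟨m, rfl⟩ : ∃ m, r = m + 2 := ⟨r - 2, by omega⟩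
  have hK : K = cyclicBidiagonal (Fin.init B) (B (Fin.last (m + 1))) := by
    ext ⟨i, a⟩ ⟨j, b⟩
    have hlast : (j : ℕ) = m + 2 - 1 ↔ j = Fin.last (m + 1) := by simp [Fin.ext_iff]
    simp only [K, cyclicBidiagonal, of_apply, hlast]
    split_ifs <;> first | omega | simp_all [Fin.init]
  rw [hK, det_cyclicBidiagonal, ← List.prod_reverse_ofFn_succ, prodDesc_eq_prod_reverse_ofFn]
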